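/- Let F : ℝ × ℝ → ℝ be four times continuously differentiable with F(x,x) = 1 for all x ∈ ℝ. Define C₂(y) := ∂²_{x₁} F(y,y) − 2 ∂_{x₁}∂_{x₂} F(y,y) + ∂²_{x₂} F(y,y). Then for each fixed x ∈ ℝ, the function h ↦ F(x−h, x) + F(x, x−h) − 2 − (h²/4) · C₂(x − h/2) is O(h⁴) as h → 0. -/

import Mathlib

open Asymptotics Filter

/-- The diagonal second-difference quantity
`C₂(y) := ∂²_{x₁} F(y,y) − 2 ∂_{x₁}∂_{x₂} F(y,y) + ∂²_{x₂} F(y,y)`. -/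
noncomputable def C2diag (F : ℝ × ℝ → ℝ) (y : ℝ) : ℝ :=
  deriv (deriv (fun z => F (z, y))) y
    - 2 * deriv (fun a => deriv (fun b => F (a, b)) y) y
    + deriv (deriv (fun z => F (y, z))) y

/-! Put `m = x - h/2`, `ξ = h/2` and `ψₘ(s) = F(m + s, m - s)`. The two values of `F` are
`ψₘ(ξ)` and `ψₘ(-ξ)`, so their sum is twice the even part of `ψₘ`, whose Taylor expansion at `0`
has no odd terms: `ψₘ(ξ) + ψₘ(-ξ) = 2 ψₘ(0) + ξ² ψₘ''(0) + O(ξ⁴)`, with `ψₘ(0) = F(m, m) = 1` and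
`ψₘ''(0) = C₂(m)`. The `O(ξ⁴)` is uniform in `m` near `x`, because it only depends on a bound for
the fourth derivative of `F` on a compact neighbourhood of `(x, x)`. -/

section MeanValue

variable {E : Type*} [NormedAddCommGroup E] [NormedSpace ℝ E]

theorem norm_le_mul_abs_pow_succ_of_hasDerivAt {f f' : ℝ → E} {r C : ℝ} {k : ℕ} (hC : 0 ≤ C)
    (hf₀ : f 0 = 0) (hf : ∀ t, HasDerivAt f (f' t) t)
    (hf' : ∀ t, |t| ≤ r → ‖f' t‖ ≤ C * |t| ^ k) {t : ℝ} (ht : |t| ≤ r) :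
    ‖f t‖ ≤ C * |t| ^ (k + 1) := by
  have hbound : ∀ s ∈ Set.uIcc 0 t, ‖f' s‖ ≤ C * |t| ^ k := fun s hs ↦ by
    have hst : |s| ≤ |t| := by simpa using Set.abs_sub_left_of_mem_uIcc hs
    exact (hf' s (hst.trans ht)).trans (by gcongr)
  have := (convex_uIcc 0 t).norm_image_sub_le_of_norm_hasDerivWithin_le
    (fun s _ ↦ (hf s).hasDerivWithinAt) hbound Set.left_mem_uIcc Set.right_mem_uIcc
  simpa [hf₀, pow_succ, mul_assoc] using this

theorem norm_even_part_sub_taylor_le {ψ : ℝ → E} (hψ : ContDiff ℝ 4 ψ) {r M : ℝ}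
    (hM : ∀ t, |t| ≤ r → ‖iteratedDeriv 4 ψ t‖ ≤ M) {ξ : ℝ} (hξ : |ξ| ≤ r) :
    ‖ψ ξ + ψ (-ξ) - (2 : ℝ) • ψ 0 - ξ ^ 2 • iteratedDeriv 2 ψ 0‖ ≤ 2 * M * |ξ| ^ 4 := by
  have hM₀ : 0 ≤ 2 * M := by
    have := hM 0 (by simpa using (abs_nonneg ξ).trans hξ)
    linarith [norm_nonneg (iteratedDeriv 4 ψ 0)]
  have hd (k : ℕ) (hk : k < 4) (t : ℝ) :
      HasDerivAt (iteratedDeriv k ψ) (iteratedDeriv (k + 1) ψ t) t := by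
    rw [iteratedDeriv_succ]
    exact ((hψ.differentiable_iteratedDeriv k (by exact_mod_cast hk)) t).hasDerivAt
  have hdneg (k : ℕ) (hk : k < 4) (t : ℝ) :
      HasDerivAt (fun s ↦ iteratedDeriv k ψ (-s)) (-iteratedDeriv (k + 1) ψ (-t)) t := by
    simpa [Function.comp_def] using (hd k hk (-t)).scomp t (hasDerivAt_neg t)
  have h3 : ∀ t, |t| ≤ r → ‖iteratedDeriv 3 ψ t - iteratedDeriv 3 ψ (-t)‖ ≤ 2 * M * |t| ^ 1 := by
    refine fun t ht ↦ norm_le_mul_abs_pow_succ_of_hasDerivAt (k := 0) hM₀ (by simp)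
      (fun s ↦ ((hd 3 (by norm_num) s).sub (hdneg 3 (by norm_num) s))) (fun s hs ↦ ?_) ht
    rw [sub_neg_eq_add, pow_zero, mul_one, two_mul]
    exact (norm_add_le _ _).trans (add_le_add (hM s hs) (hM (-s) (by rwa [abs_neg])))
  have h2 : ∀ t, |t| ≤ r → ‖iteratedDeriv 2 ψ t + iteratedDeriv 2 ψ (-t)
      - (2 : ℝ) • iteratedDeriv 2 ψ 0‖ ≤ 2 * M * |t| ^ 2 := by
    refine fun t ht ↦ norm_le_mul_abs_pow_succ_of_hasDerivAt hM₀ (by simp [two_smul])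
      (fun s ↦ (((hd 2 (by norm_num) s).add (hdneg 2 (by norm_num) s)).sub_const _)) ?_ ht
    simpa [sub_eq_add_neg] using h3
  have h1 : ∀ t, |t| ≤ r → ‖iteratedDeriv 1 ψ t - iteratedDeriv 1 ψ (-t)
      - (2 * t) • iteratedDeriv 2 ψ 0‖ ≤ 2 * M * |t| ^ 3 := by
    refine fun t ht ↦ norm_le_mul_abs_pow_succ_of_hasDerivAt hM₀ (by simp)
      (fun s ↦ (((hd 1 (by norm_num) s).sub (hdneg 1 (by norm_num) s)).sub
        (((hasDerivAt_id s).const_mul 2).smul_const _))) ?_ ht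
    simpa [sub_eq_add_neg] using h2
  refine norm_le_mul_abs_pow_succ_of_hasDerivAt (k := 3)
    (f := fun t ↦ ψ t + ψ (-t) - (2 : ℝ) • ψ 0 - t ^ 2 • iteratedDeriv 2 ψ 0) hM₀
    (by simp [two_smul])
    (fun s ↦ ?_) (fun t ht ↦ by simpa [sub_eq_add_neg] using h1 t ht) hξ
  simpa [sub_eq_add_neg] using
    (((hd 0 (by norm_num) s).fun_add (hdneg 0 (by norm_num) s)).sub_const ((2 : ℝ) • ψ 0)).fun_sub
      ((hasDerivAt_pow 2 s).smul_const (iteratedDeriv 2 ψ 0))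

end MeanValue

section Lines

variable {E G : Type*} [NormedAddCommGroup E] [NormedSpace ℝ E] [NormedAddCommGroup G]
  [NormedSpace ℝ G] {n : WithTop ℕ∞} {f : E → G} {k : ℕ}

theorem iteratedDeriv_comp_add_smul (hf : ContDiff ℝ n f) (hk : k ≤ n) (p v : E) (t : ℝ) :
    iteratedDeriv k (fun s ↦ f (p + s • v)) t = iteratedFDeriv ℝ k f (p + t • v) fun _ ↦ v := by
  have hline : (fun s ↦ f (p + s • v))
      = (fun q ↦ f (p + q)) ∘ ContinuousLinearMap.smulRight (1 : ℝ →L[ℝ] ℝ) v := by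
    ext s; simp
  have hshift : ContDiff ℝ n fun q ↦ f (p + q) := hf.comp (contDiff_const.add contDiff_id)
  rw [iteratedDeriv_eq_iteratedFDeriv, hline,
    ContinuousLinearMap.iteratedFDeriv_comp_right _ hshift _ hk, iteratedFDeriv_comp_add_left]
  simp

theorem IsCompact.exists_bound_iteratedDeriv_comp_add_smul {K : Set E} (hK : IsCompact K)
    (hf : ContDiff ℝ n f) (hk : k ≤ n) (v : E) :
    ∃ M, ∀ p (t : ℝ), p + t • v ∈ K → ‖iteratedDeriv k (fun s ↦ f (p + s • v)) t‖ ≤ M := by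
  obtain ⟨C, hC⟩ := hK.exists_bound_of_continuousOn (hf.continuous_iteratedFDeriv hk).continuousOn
  refine ⟨C * ‖v‖ ^ k, fun p t hpt ↦ ?_⟩
  rw [iteratedDeriv_comp_add_smul hf hk]
  calc ‖iteratedFDeriv ℝ k f (p + t • v) fun _ ↦ v‖
      ≤ ‖iteratedFDeriv ℝ k f (p + t • v)‖ * ∏ _ : Fin k, ‖v‖ :=
        ContinuousMultilinearMap.le_opNorm _ _
    _ ≤ C * ‖v‖ ^ k := by
        rw [Finset.prod_const, Finset.card_univ, Fintype.card_fin]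
        gcongr
        exact hC _ hpt

end Lines

section Partials

variable {E : Type*} [NormedAddCommGroup E] [NormedSpace ℝ E] {G : ℝ × ℝ → E} {a b : ℝ}

theorem DifferentiableAt.hasDerivAt_partial_fst (hG : DifferentiableAt ℝ G (a, b)) :
    HasDerivAt (fun z ↦ G (z, b)) (fderiv ℝ G (a, b) (1, 0)) a :=
  hG.hasFDerivAt.comp_hasDerivAt a ((hasDerivAt_id a).prodMk (hasDerivAt_const a b))

theorem DifferentiableAt.hasDerivAt_partial_snd (hG : DifferentiableAt ℝ G (a, b)) :
    HasDerivAt (fun z ↦ G (a, z)) (fderiv ℝ G (a, b) (0, 1)) b :=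
  hG.hasFDerivAt.comp_hasDerivAt b ((hasDerivAt_const b a).prodMk (hasDerivAt_id b))

end Partials

theorem C2diag_eq_fderiv_fderiv {F : ℝ × ℝ → ℝ} (hF : ContDiff ℝ 2 F) (y : ℝ) :
    C2diag F y = fderiv ℝ (fderiv ℝ F) (y, y) (1, -1) (1, -1) := by
  have hF₁ : Differentiable ℝ F := hF.differentiable (by norm_num)
  have hF₂ : Differentiable ℝ (fderiv ℝ F) :=
    (hF.fderiv_right (m := 1) le_rfl).differentiable one_ne_zero
  have hfst (b : ℝ) (u : ℝ × ℝ) : deriv (fun a ↦ fderiv ℝ F (a, b) u) y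
      = fderiv ℝ (fderiv ℝ F) (y, b) (1, 0) u := by
    simpa using ((hF₂ _).hasDerivAt_partial_fst.clm_apply (hasDerivAt_const _ u)).deriv
  have hsnd (u : ℝ × ℝ) : deriv (fun b ↦ fderiv ℝ F (y, b) u) y
      = fderiv ℝ (fderiv ℝ F) (y, y) (0, 1) u := by
    simpa using ((hF₂ _).hasDerivAt_partial_snd.clm_apply (hasDerivAt_const _ u)).deriv
  have e₁ : deriv (fun z ↦ F (z, y)) = fun a ↦ fderiv ℝ F (a, y) (1, 0) :=
    funext fun a ↦ (hF₁ _).hasDerivAt_partial_fst.deriv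
  have e₂ : (fun a ↦ deriv (fun b ↦ F (a, b)) y) = fun a ↦ fderiv ℝ F (a, y) (0, 1) :=
    funext fun a ↦ (hF₁ _).hasDerivAt_partial_snd.deriv
  have e₃ : deriv (fun z ↦ F (y, z)) = fun b ↦ fderiv ℝ F (y, b) (0, 1) :=
    funext fun b ↦ (hF₁ _).hasDerivAt_partial_snd.deriv
  have hsymm := hF.contDiffAt.isSymmSndFDerivAt (x := (y, y)) (by simp) (0, 1) (1, 0)
  have hw : ((1 : ℝ), (-1 : ℝ)) = (1, 0) - (0, 1) := by simp
  rw [C2diag, e₁, e₂, e₃, hfst, hfst, hsnd, hw]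
  simp only [map_sub, sub_apply, hsymm]
  ring

theorem C2diag_eq_iteratedDeriv_two {F : ℝ × ℝ → ℝ} (hF : ContDiff ℝ 2 F) (y : ℝ) :
    C2diag F y = iteratedDeriv 2 (fun s : ℝ ↦ F ((y, y) + s • ((1 : ℝ), (-1 : ℝ)))) 0 := by
  rw [iteratedDeriv_comp_add_smul hF le_rfl, iteratedFDeriv_two_apply, C2diag_eq_fderiv_fderiv hF]
  simp

theorem diag_add_smul_antidiag (m s : ℝ) :
    ((m, m) : ℝ × ℝ) + s • ((1 : ℝ), (-1 : ℝ)) = (m + s, m - s) := by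
  ext <;> simp [sub_eq_add_neg]

theorem local_average_eq_even_part {F : ℝ × ℝ → ℝ} (hF : ContDiff ℝ 2 F)
    (hdiag : ∀ x : ℝ, F (x, x) = 1) (x h : ℝ) :
    F (x - h, x) + F (x, x - h) - 2 - h ^ 2 / 4 * C2diag F (x - h / 2)
      = F ((x - h / 2, x - h / 2) + (h / 2) • ((1 : ℝ), (-1 : ℝ)))
        + F ((x - h / 2, x - h / 2) + (-(h / 2)) • ((1 : ℝ), (-1 : ℝ)))
        - (2 : ℝ) • F ((x - h / 2, x - h / 2) + (0 : ℝ) • ((1 : ℝ), (-1 : ℝ)))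
        - (h / 2) ^ 2 • iteratedDeriv 2
          (fun s : ℝ ↦ F ((x - h / 2, x - h / 2) + s • ((1 : ℝ), (-1 : ℝ)))) 0 := by
  rw [← C2diag_eq_iteratedDeriv_two hF, diag_add_smul_antidiag, diag_add_smul_antidiag,
    diag_add_smul_antidiag, add_zero, sub_zero, hdiag, smul_eq_mul, smul_eq_mul]
  ring_nf

/-- Taylor expansion of the local averaging term: for a `C⁴` correlation function
`F` with unit diagonal,
`F(x−h,x) + F(x,x−h) − 2 − (h²/4) C₂(x − h/2) = O(h⁴)` as `h → 0`. -/
theorem local_average_expansion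
    (F : ℝ × ℝ → ℝ) (hF : ContDiff ℝ 4 F) (hdiag : ∀ x : ℝ, F (x, x) = 1) :
    ∀ x : ℝ,
      (fun h : ℝ => F (x - h, x) + F (x, x - h) - 2 - h ^ 2 / 4 * C2diag F (x - h / 2))
        =O[nhds 0] fun h : ℝ => h ^ 4 := by
  intro x
  obtain ⟨M, hM⟩ :=
    (isCompact_closedBall ((x, x) : ℝ × ℝ) 1).exists_bound_iteratedDeriv_comp_add_smul hF le_rfl
      ((1 : ℝ), (-1 : ℝ))
  refine IsBigO.of_bound (M / 8) ?_
  filter_upwards [Metric.closedBall_mem_nhds (0 : ℝ) one_pos] with h hh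
  set m := x - h / 2
  have hball (s : ℝ) (hs : |s| ≤ |h / 2|) :
      (m, m) + s • ((1 : ℝ), (-1 : ℝ)) ∈ Metric.closedBall (x, x) 1 := by
    rw [mem_closedBall_zero_iff, Real.norm_eq_abs] at hh
    rw [abs_div, abs_two] at hs
    obtain ⟨hs₁, hs₂⟩ := abs_le.mp hs
    rw [diag_add_smul_antidiag, Metric.mem_closedBall, Prod.dist_eq, Real.dist_eq, Real.dist_eq]
    refine max_le (abs_le.mpr ⟨?_, ?_⟩) (abs_le.mpr ⟨?_, ?_⟩) <;> dsimp only [m] <;>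
      linarith [le_abs_self h, neg_abs_le h]
  have hψ : ContDiff ℝ 4 fun s : ℝ ↦ F ((m, m) + s • ((1 : ℝ), (-1 : ℝ))) :=
    hF.comp (contDiff_const.add (contDiff_id.smul contDiff_const))
  rw [local_average_eq_even_part (hF.of_le (by norm_num)) hdiag]
  calc _ ≤ 2 * M * |h / 2| ^ 4 :=
        norm_even_part_sub_taylor_le hψ (fun s hs ↦ hM _ _ (hball s hs)) le_rfl
    _ = M / 8 * ‖h ^ 4‖ := by rw [abs_div, Real.norm_eq_abs, abs_pow]; ring
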